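/- For every n ≥ 0, the q-binomial Eulerian polynomial Ã_n(q,t) := 1 + t·Σ_{k=1}^n [n choose k]_q·A_k(q,t) satisfies Ã_n(q,t) = Σ_{σ ∈ S̃_n} q^{maj(σ) − exc(σ)} t^{exc(σ)+1}, where the sum is over decorated permutations of [n]. -/

import Mathlib

open scoped Classical

/-- A decorated permutation of `[n]`, encoded as its one-line word
`w : Fin n → Fin (n+1)` (position `i` is the 1-based position `i+1`, value `0`
means no value): the nonzero entries are distinct, and every nonzero value is
(the 1-based name of) a position carrying a nonzero entry.  Hence the nonzero
entries form a permutation of their set of positions. -/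
def IsDecorated {n : ℕ} (w : Fin n → Fin (n + 1)) : Prop :=
  (∀ i j, (w i : ℕ) ≠ 0 → w i = w j → i = j) ∧
  (∀ i, (w i : ℕ) ≠ 0 → ∃ j : Fin n, (w j : ℕ) ≠ 0 ∧ (w i : ℕ) = (j : ℕ) + 1)

/-- The all-zero decorated permutation `θ`. -/
def isTheta {n : ℕ} (w : Fin n → Fin (n + 1)) : Prop := ∀ i, (w i : ℕ) = 0

/-- The number of excedances of a decorated permutation (positions `i` with
`w_i > i`, in 1-based terms). -/
def dExc {n : ℕ} (w : Fin n → Fin (n + 1)) : ℕ :=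
  (Finset.univ.filter (fun i : Fin n => (i : ℕ) + 1 < (w i : ℕ))).card

/-- `exc(w) + 1`, where `exc(θ) = -1`. -/
noncomputable def dExcP1 {n : ℕ} (w : Fin n → Fin (n + 1)) : ℕ :=
  if isTheta w then 0 else dExc w + 1

/-- The number of descents of the one-line word of a decorated permutation,
with respect to the order `0 < 1 < ⋯ < n`. -/
def dDes {n : ℕ} (w : Fin n → Fin (n + 1)) : ℕ :=
  ((Finset.range n).filter (fun i =>
    ∃ h : i + 1 < n, (w ⟨i + 1, h⟩ : ℕ) < (w ⟨i, Nat.lt_of_succ_lt h⟩ : ℕ))).card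

/-- The major index of the one-line word of a decorated permutation. -/
def dMaj {n : ℕ} (w : Fin n → Fin (n + 1)) : ℕ :=
  ∑ i ∈ (Finset.range n).filter (fun i =>
      ∃ h : i + 1 < n, (w ⟨i + 1, h⟩ : ℕ) < (w ⟨i, Nat.lt_of_succ_lt h⟩ : ℕ)), (i + 1)

/-- `maj(w) - exc(w)` for a decorated permutation, with value `0` for `θ`
(since `maj(θ) = exc(θ) = -1`). -/
noncomputable def dMajSubExc {n : ℕ} (w : Fin n → Fin (n + 1)) : ℕ :=
  if isTheta w then 0 else dMaj w - dExc w

/-- The number of excedances of `σ ∈ S_k`. -/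
def excNum {k : ℕ} (σ : Equiv.Perm (Fin k)) : ℕ :=
  (Finset.univ.filter (fun i : Fin k => (i : ℕ) < (σ i : ℕ))).card

/-- The major index of `σ ∈ S_k`. -/
def majNum {k : ℕ} (σ : Equiv.Perm (Fin k)) : ℕ :=
  ∑ i ∈ (Finset.range k).filter (fun i =>
      ∃ h : i + 1 < k, σ ⟨i + 1, h⟩ < σ ⟨i, Nat.lt_of_succ_lt h⟩), (i + 1)

/-- The `q`-integer `[j]_q` in the field of rational functions in `q`. -/
noncomputable def qInt (j : ℕ) : RatFunc ℚ := ∑ i ∈ Finset.range j, RatFunc.X ^ i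

/-- The `q`-factorial `[j]_q!`. -/
noncomputable def qFact (j : ℕ) : RatFunc ℚ := ∏ i ∈ Finset.Icc 1 j, qInt i

/-- The Gaussian binomial coefficient `[n choose k]_q = [n]_q!/([k]_q![n-k]_q!)`. -/
noncomputable def qBinom (n k : ℕ) : RatFunc ℚ := qFact n / (qFact k * qFact (n - k))

/-- The `q`-Eulerian polynomial
`A_k(q,t) = Σ_{π ∈ S_k} q^{maj π - exc π} t^{exc π}`, as a polynomial in `t`
with coefficients rational functions in `q`. -/
noncomputable def qEulerian (k : ℕ) : Polynomial (RatFunc ℚ) :=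
  ∑ σ : Equiv.Perm (Fin k),
    Polynomial.C ((RatFunc.X : RatFunc ℚ) ^ (majNum σ - excNum σ)) *
      Polynomial.X ^ excNum σ

/-! A decorated permutation with `k ≥ 1` nonzero entries is the same as a weakly increasing
`g : Fin k → {0, …, n - k}` together with `σ ∈ S_k`: the nonzero entries sit at the positions
`g a + a` and are ordered like `σ`. Its excedances are those of `σ`, and its major index is
`maj σ` plus a statistic `majShift` of `g` that depends on `σ` only through its descent set.
Whatever that descent set, `∑_g q ^ majShift = [n choose k]_q`: peeling off the last entry of
`g` reduces this to the two `q`-hockey-stick identities. Summing over `σ` gives the term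
`t [n choose k]_q A_k(q, t)`, and the all-zero word contributes `1`. -/

open Finset
open RatFunc (X)

lemma qInt_ne_zero {j : ℕ} (hj : j ≠ 0) : qInt j ≠ 0 := by
  have hp : (∑ i ∈ range j, (Polynomial.X : Polynomial ℚ) ^ i) ≠ 0 := fun h => by
    simpa [hj] using congrArg (Polynomial.eval 1) h
  simpa [qInt, RatFunc.algebraMap_X] using (RatFunc.algebraMap_ne_zero hp)

lemma qInt_add (a b : ℕ) : qInt (a + b) = qInt a + X ^ a * qInt b := by
  simp only [qInt, sum_range_add, mul_sum, pow_add]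

lemma qFact_zero : qFact 0 = 1 := rfl

lemma qFact_succ (j : ℕ) : qFact (j + 1) = qFact j * qInt (j + 1) :=
  prod_Icc_succ_top (by omega) _

lemma qFact_ne_zero (j : ℕ) : qFact j ≠ 0 :=
  prod_ne_zero_iff.2 fun i hi => qInt_ne_zero (by grind)

lemma qBinom_zero_right (n : ℕ) : qBinom n 0 = 1 := by
  simp [qBinom, qFact_zero, qFact_ne_zero]

lemma qBinom_self (n : ℕ) : qBinom n n = 1 := by
  simp [qBinom, qFact_zero, qFact_ne_zero]

lemma qBinom_pascal (m k : ℕ) :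
    qBinom (m + k + 2) (k + 1)
      = qBinom (m + k + 1) (k + 1) + X ^ (m + 1) * qBinom (m + k + 1) k := by
  have hsplit : qInt (m + k + 2) = qInt (m + 1) + X ^ (m + 1) * qInt (k + 1) := by
    rw [← qInt_add]; ring_nf
  simp only [qBinom, show m + k + 2 - (k + 1) = m + 1 by omega,
    show m + k + 1 - (k + 1) = m by omega, show m + k + 1 - k = m + 1 by omega,
    show m + k + 2 = m + k + 1 + 1 by omega, qFact_succ, hsplit]
  have := qFact_ne_zero (m + k + 1)
  have := qFact_ne_zero k
  have := qFact_ne_zero m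
  have := qInt_ne_zero (m.succ_ne_zero)
  have := qInt_ne_zero (k.succ_ne_zero)
  field_simp

lemma qBinom_pascal' (m k : ℕ) :
    qBinom (m + k + 2) (k + 1)
      = qBinom (m + k + 1) k + X ^ (k + 1) * qBinom (m + k + 1) (k + 1) := by
  have hsplit : qInt (m + k + 2) = qInt (k + 1) + X ^ (k + 1) * qInt (m + 1) := by
    rw [← qInt_add]; ring_nf
  simp only [qBinom, show m + k + 2 - (k + 1) = m + 1 by omega,
    show m + k + 1 - (k + 1) = m by omega, show m + k + 1 - k = m + 1 by omega,
    show m + k + 2 = m + k + 1 + 1 by omega, qFact_succ, hsplit]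
  have := qFact_ne_zero (m + k + 1)
  have := qFact_ne_zero k
  have := qFact_ne_zero m
  have := qInt_ne_zero (m.succ_ne_zero)
  have := qInt_ne_zero (k.succ_ne_zero)
  field_simp

lemma sum_X_pow_mul_qBinom (k G : ℕ) :
    ∑ x ∈ range (G + 1), X ^ x * qBinom (x + k) k = qBinom (G + k + 1) (k + 1) := by
  induction G with
  | zero => simp [qBinom_self]
  | succ G ih =>
    rw [sum_range_succ, ih, show G + 1 + k + 1 = G + k + 2 by omega, qBinom_pascal,
      show G + 1 + k = G + k + 1 by omega]

lemma sum_X_pow_mul_qBinom_add_qBinom (k G : ℕ) :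
    ∑ x ∈ range G, X ^ (x + k + 1) * qBinom (x + k) k + qBinom (G + k) k
      = qBinom (G + k + 1) (k + 1) := by
  cases G with
  | zero => simp [qBinom_self]
  | succ G =>
    rw [show G + 1 + k + 1 = G + k + 2 by omega, qBinom_pascal', ← sum_X_pow_mul_qBinom,
      mul_sum, add_comm, show G + 1 + k = G + k + 1 by omega]
    congr 1
    exact sum_congr rfl fun x _ => by ring

section MajShift

/- What the `a`-th nonzero entry of a decorated word, at position `x + a`, adds to its major index
beyond `maj σ`; `y` is the next entry of `g` (the bound after the last one). If `σ` descends at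
`a` (`a ∈ D`) so does the word, contributing `x + a + 1` against `a + 1`; otherwise the word
descends there iff the next position holds a zero, i.e. iff `x < y`. -/
def majShiftTerm (D : Finset ℕ) (a x y : ℕ) : ℕ :=
  if a ∈ D then x else if x < y then x + a + 1 else 0

lemma sum_qBinom_mul_X_pow_majShiftTerm (D : Finset ℕ) (k G : ℕ) :
    ∑ x ∈ range (G + 1), qBinom (x + k) k * X ^ majShiftTerm D k x G
      = qBinom (G + k + 1) (k + 1) := by
  by_cases hk : k ∈ D
  · simp only [majShiftTerm, if_pos hk, ← sum_X_pow_mul_qBinom, mul_comm]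
  · rw [← sum_X_pow_mul_qBinom_add_qBinom, sum_range_succ]
    simp only [majShiftTerm, if_neg hk, lt_irrefl, if_false, pow_zero, mul_one]
    congr 1
    refine sum_congr rfl fun x hx => ?_
    rw [if_pos (mem_range.1 hx), mul_comm]

variable {m k : ℕ}

def nextEntry (G : ℕ) (g : Fin k → Fin (m + 1)) (a : Fin k) : ℕ :=
  if h : (a : ℕ) + 1 < k then g ⟨a + 1, h⟩ else G

def majShift (D : Finset ℕ) (G : ℕ) (g : Fin k → Fin (m + 1)) : ℕ :=
  ∑ a : Fin k, majShiftTerm D a (g a) (nextEntry G g a)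

def boundedMonotone (m k G : ℕ) : Finset (Fin k → Fin (m + 1)) :=
  {g | Monotone g ∧ ∀ a, (g a : ℕ) ≤ G}

lemma Fin.monotone_snoc_iff {α : Type*} [Preorder α] {x : α} {g : Fin k → α} :
    Monotone (Fin.snoc g x : Fin (k + 1) → α) ↔ Monotone g ∧ ∀ a, g a ≤ x := by
  refine ⟨fun h => ⟨fun a b hab => ?_, fun a => ?_⟩, fun ⟨hg, hx⟩ i j hij => ?_⟩
  · simpa using h (Fin.castSucc_le_castSucc_iff.2 hab)
  · simpa using h (Fin.le_last a.castSucc)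
  · induction j using Fin.lastCases with
    | last => induction i using Fin.lastCases <;> simp [hx]
    | cast j =>
      induction i using Fin.lastCases with
      | last => exact absurd hij (not_le.2 (Fin.castSucc_lt_last j))
      | cast i => simpa using hg (by simpa using hij)

lemma snoc_mem_boundedMonotone_iff (G : ℕ) (x : Fin (m + 1)) (g : Fin k → Fin (m + 1)) :
    Fin.snoc g x ∈ boundedMonotone m (k + 1) G ↔
      g ∈ boundedMonotone m k x ∧ (x : ℕ) ≤ G := by
  simp only [boundedMonotone, mem_filter, mem_univ, true_and, Fin.monotone_snoc_iff,
    Fin.forall_fin_succ', Fin.snoc_castSucc, Fin.snoc_last, Fin.le_def]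
  grind

lemma nextEntry_snoc_castSucc (G : ℕ) (x : Fin (m + 1)) (g : Fin k → Fin (m + 1)) (a : Fin k) :
    nextEntry G (Fin.snoc g x) a.castSucc = nextEntry x g a := by
  unfold nextEntry
  rw [dif_pos (by simp)]
  by_cases h : (a : ℕ) + 1 < k
  · rw [dif_pos h, ← Fin.snoc_castSucc (α := fun _ => Fin (m + 1)) (p := g) x]
    rfl
  · have hlast : (⟨(a.castSucc : ℕ) + 1, by simp⟩ : Fin (k + 1)) = Fin.last k :=
      Fin.ext (by simp; omega)
    rw [dif_neg h, hlast, Fin.snoc_last]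

lemma nextEntry_last (G : ℕ) (g : Fin (k + 1) → Fin (m + 1)) :
    nextEntry G g (Fin.last k) = G := by
  simp [nextEntry]

lemma majShift_snoc (D : Finset ℕ) (G : ℕ) (x : Fin (m + 1)) (g : Fin k → Fin (m + 1)) :
    majShift D G (Fin.snoc g x) = majShift D x g + majShiftTerm D k x G := by
  simp only [majShift, Fin.sum_univ_castSucc, Fin.snoc_castSucc, Fin.snoc_last,
    nextEntry_snoc_castSucc, nextEntry_last, Fin.val_castSucc, Fin.val_last]

lemma sum_boundedMonotone_X_pow_majShift (D : Finset ℕ) :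
    ∀ {k G : ℕ}, G ≤ m →
      ∑ g ∈ boundedMonotone m k G, X ^ majShift D G g = qBinom (G + k) k
  | 0, G, _ => by
    have : boundedMonotone m 0 G = univ := eq_univ_of_forall fun g =>
      mem_filter.2 ⟨mem_univ g, fun a => a.elim0, fun a => a.elim0⟩
    simp [this, majShift, qBinom_zero_right]
  | k + 1, G, hG => by
    have hfib (x : Fin (m + 1)) : ∑ g : Fin k → Fin (m + 1),
        (if Fin.snoc g x ∈ boundedMonotone m (k + 1) G then X ^ majShift D G (Fin.snoc g x)
          else 0)
          = if (x : ℕ) ≤ G then qBinom (x + k) k * X ^ majShiftTerm D k x G else 0 := by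
      simp only [snoc_mem_boundedMonotone_iff, majShift_snoc, pow_add, ite_and]
      split_ifs with hx
      · rw [← sum_boundedMonotone_X_pow_majShift D (hx.trans hG), sum_mul, sum_ite_mem,
          univ_inter]
      · simp
    rw [← univ_inter (boundedMonotone _ _ _), ← sum_ite_mem,
      ← (Fin.snocEquiv fun _ => Fin (m + 1)).sum_comp, Fintype.sum_prod_type]
    refine (Fintype.sum_congr _ _ hfib).trans ?_
    have hrange : (range (m + 1)).filter (· ≤ G) = range (G + 1) := by
      ext
      simp only [mem_filter, mem_range]
      omega
    rw [Fin.sum_univ_eq_sum_range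
        (fun x => if x ≤ G then qBinom (x + k) k * X ^ majShiftTerm D k x G else 0),
      ← sum_filter, hrange, sum_qBinom_mul_X_pow_majShiftTerm, add_assoc]

end MajShift

def descents {α : Type*} [LT α] [DecidableLT α] {n : ℕ} (w : Fin n → α) : Finset ℕ :=
  (range n).filter fun i => ∃ h : i + 1 < n, w ⟨i + 1, h⟩ < w ⟨i, Nat.lt_of_succ_lt h⟩

lemma mem_descents {α : Type*} [LT α] [DecidableLT α] {n : ℕ} {w : Fin n → α} {i : ℕ} :
    i ∈ descents w ↔ ∃ h : i + 1 < n, w ⟨i + 1, h⟩ < w ⟨i, Nat.lt_of_succ_lt h⟩ := by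
  simp only [descents, mem_filter, mem_range, and_iff_right_iff_imp]
  exact fun ⟨h, _⟩ => Nat.lt_of_succ_lt h

lemma sum_descents_eq_sum_ite {α M : Type*} [LT α] [DecidableLT α] [AddCommMonoid M] {n : ℕ}
    (w : Fin n → α) (f : ℕ → M) :
    ∑ i ∈ descents w, f i = ∑ i : Fin n, if (i : ℕ) ∈ descents w then f i else 0 := by
  rw [Fin.sum_univ_eq_sum_range (fun i => if i ∈ descents w then f i else 0), sum_ite_mem,
    inter_eq_right.2 (show descents w ⊆ range n from filter_subset _ _)]

lemma majNum_eq_sum_descents {k : ℕ} (σ : Equiv.Perm (Fin k)) :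
    majNum σ = ∑ i ∈ descents σ, (i + 1) := rfl

lemma val_apply_le_of_forall_notMem_descents {k : ℕ} (σ : Equiv.Perm (Fin k)) (i : Fin k)
    (h : ∀ j, (i : ℕ) ≤ j → j ∉ descents σ) : (σ i : ℕ) ≤ i := by
  cases k with
  | zero => exact i.elim0
  | succ k =>
    induction i using Fin.reverseInduction with
    | last => simpa using (σ (Fin.last k)).is_le
    | cast i ih =>
      have hsucc := ih fun j hj => h j (by simp at hj ⊢; omega)
      have hasc : ¬ σ i.succ < σ i.castSucc := fun hlt =>
        h i le_rfl (mem_descents.2 ⟨by simp, hlt⟩)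
      have hne : σ i.castSucc ≠ σ i.succ := σ.injective.ne Fin.castSucc_lt_succ.ne
      have := lt_of_le_of_ne (not_lt.1 hasc) hne
      simp only [Fin.lt_def, Fin.val_succ, Fin.val_castSucc] at this hsucc ⊢
      omega

/- Needed because `maj - exc` is truncated subtraction in `dMajSubExc` and `qEulerian`. Every
excedance lies at or left of the last descent, since `σ i ≤ i` on an increasing tail. -/
lemma excNum_le_majNum {k : ℕ} (σ : Equiv.Perm (Fin k)) : excNum σ ≤ majNum σ := by
  set M := (descents σ).sup (· + 1)
  have hmaj : M ≤ majNum σ := majNum_eq_sum_descents σ ▸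
    Finset.sup_le fun i hi => single_le_sum (f := (· + 1)) (fun _ _ => Nat.zero_le _) hi
  have hexc : excNum σ ≤ M := by
    refine (card_le_card_of_injOn Fin.val (fun i hi => ?_) Fin.val_injective.injOn).trans
      (card_range M).le
    by_contra hiM
    simp only [coe_filter, mem_univ, true_and, Set.mem_ofPred_eq, coe_range, Set.mem_Iio] at hi hiM
    refine absurd hi (not_lt.2 (val_apply_le_of_forall_notMem_descents σ i fun j hij hj => ?_))
    have := le_sup (f := (· + 1)) hj
    omega
  exact hexc.trans hmaj

def wordSupport {n : ℕ} (w : Fin n → Fin (n + 1)) : Finset (Fin n) := {i | (w i : ℕ) ≠ 0}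

lemma card_wordSupport_eq_zero_iff {n : ℕ} {w : Fin n → Fin (n + 1)} :
    #(wordSupport w) = 0 ↔ isTheta w := by
  simp [wordSupport, isTheta, filter_eq_empty_iff]

lemma Fin.val_add_sub_le_of_strictMono {n N : ℕ} {f : Fin n → Fin N} (hf : StrictMono f)
    {a b : Fin n} (hab : a ≤ b) : (f a : ℕ) + (b - a) ≤ f b := by
  obtain ⟨d, hd⟩ := Nat.exists_eq_add_of_le (Fin.le_def.1 hab)
  induction d generalizing b with
  | zero => simp [Fin.ext hd]
  | succ d ih =>
    have hlt : (a : ℕ) + d < n := by omega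
    have := ih (b := ⟨a + d, hlt⟩) (Fin.le_def.2 (by simp)) rfl
    have := Fin.lt_def.1 (hf (show (⟨a + d, hlt⟩ : Fin n) < b from
      Fin.lt_def.2 (by simp; omega)))
    simp only at *
    omega

section Decorate

variable {m k : ℕ}

def spread (g : Fin k → Fin (m + 1)) (a : Fin k) : Fin (m + k) :=
  ⟨g a + a, by have := (g a).isLt; have := a.isLt; omega⟩

lemma spread_strictMono {g : Fin k → Fin (m + 1)} (hg : Monotone g) : StrictMono (spread g) :=
  fun a b hab => Fin.lt_def.2 (by
    have := Fin.le_def.1 (hg hab.le); have := Fin.lt_def.1 hab; simp only [spread]; omega)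

lemma exists_spread_eq {e : Fin k → Fin (m + k)} (he : StrictMono e) :
    ∃ g : Fin k → Fin (m + 1), Monotone g ∧ spread g = e := by
  have hlow (a : Fin k) : (a : ℕ) ≤ e a := by
    have := Fin.val_add_sub_le_of_strictMono he (a := ⟨0, a.pos⟩) (b := a)
      (Fin.le_def.2 (Nat.zero_le _))
    simp only at this
    omega
  have hup (a : Fin k) : (e a : ℕ) - a < m + 1 := by
    have hk : k - 1 < k := by have := a.isLt; omega
    have := Fin.val_add_sub_le_of_strictMono he (a := a) (b := ⟨k - 1, hk⟩)
      (Fin.le_def.2 (by simp; omega))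
    have := (e ⟨k - 1, hk⟩).isLt
    simp only at *
    omega
  refine ⟨fun a => ⟨e a - a, hup a⟩, fun a b hab => Fin.le_def.2 ?_,
    funext fun a => Fin.ext ?_⟩
  · have := Fin.val_add_sub_le_of_strictMono he hab
    have := Fin.le_def.1 hab
    simp only
    omega
  · have := hlow a
    simp only [spread]
    omega

lemma spread_eq_spread_add_one_iff {g : Fin k → Fin (m + 1)} (hg : Monotone g) {a b : Fin k} :
    (spread g b : ℕ) = spread g a + 1 ↔ (b : ℕ) = a + 1 ∧ g b = g a := by
  simp only [spread, Fin.ext_iff]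
  constructor
  · intro h
    have hab : a < b :=
      (spread_strictMono hg).lt_iff_lt.1 (Fin.lt_def.2 (by simp only [spread]; omega))
    have := Fin.le_def.1 (hg hab.le)
    have := Fin.lt_def.1 hab
    omega
  · omega

noncomputable def decorate (g : Fin k → Fin (m + 1)) (σ : Equiv.Perm (Fin k)) :
    Fin (m + k) → Fin (m + k + 1) :=
  Function.extend (spread g) (fun a => (spread g (σ a)).succ) 0

lemma decorate_spread {g : Fin k → Fin (m + 1)} (hg : Monotone g) (σ : Equiv.Perm (Fin k))
    (a : Fin k) :
    decorate g σ (spread g a) = (spread g (σ a)).succ :=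
  (spread_strictMono hg).injective.extend_apply _ _ a

lemma decorate_of_notMem_range (g : Fin k → Fin (m + 1)) (σ : Equiv.Perm (Fin k))
    {i : Fin (m + k)} (hi : i ∉ Set.range (spread g)) : decorate g σ i = 0 :=
  Function.extend_apply' _ _ _ hi

lemma decorate_ne_zero_iff {g : Fin k → Fin (m + 1)} (hg : Monotone g) (σ : Equiv.Perm (Fin k))
    (i : Fin (m + k)) : (decorate g σ i : ℕ) ≠ 0 ↔ i ∈ Set.range (spread g) := by
  refine ⟨fun h => by_contra fun hi => h (by simp [decorate_of_notMem_range g σ hi]), ?_⟩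
  rintro ⟨a, rfl⟩
  simp [decorate_spread hg]

lemma sum_eq_sum_spread {M : Type*} [AddCommMonoid M] {g : Fin k → Fin (m + 1)} (hg : Monotone g)
    (f : Fin (m + k) → M) (hf : ∀ i ∉ Set.range (spread g), f i = 0) :
    ∑ i, f i = ∑ a, f (spread g a) :=
  (Fintype.sum_of_injective _ (spread_strictMono hg).injective _ f hf fun _ => rfl).symm

lemma isDecorated_decorate {g : Fin k → Fin (m + 1)} (hg : Monotone g) (σ : Equiv.Perm (Fin k)) :
    IsDecorated (decorate g σ) := by
  constructor
  · intro i j hi hij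
    obtain ⟨a, rfl⟩ := (decorate_ne_zero_iff hg σ i).1 hi
    obtain ⟨b, rfl⟩ := (decorate_ne_zero_iff hg σ j).1 (hij ▸ hi)
    rw [decorate_spread hg, decorate_spread hg, Fin.succ_inj,
      (spread_strictMono hg).injective.eq_iff, σ.injective.eq_iff] at hij
    rw [hij]
  · intro i hi
    obtain ⟨a, rfl⟩ := (decorate_ne_zero_iff hg σ i).1 hi
    exact ⟨spread g (σ a), (decorate_ne_zero_iff hg σ _).2 ⟨σ a, rfl⟩,
      by simp [decorate_spread hg]⟩

lemma card_wordSupport_decorate {g : Fin k → Fin (m + 1)} (hg : Monotone g)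
    (σ : Equiv.Perm (Fin k)) : #(wordSupport (decorate g σ)) = k := by
  rw [wordSupport, card_filter,
    sum_eq_sum_spread hg _ fun i hi => by simp [decorate_of_notMem_range g σ hi]]
  simp [decorate_spread hg]

lemma dExc_decorate {g : Fin k → Fin (m + 1)} (hg : Monotone g) (σ : Equiv.Perm (Fin k)) :
    dExc (decorate g σ) = excNum σ := by
  rw [dExc, excNum, card_filter, card_filter,
    sum_eq_sum_spread hg _ fun i hi => by simp [decorate_of_notMem_range g σ hi]]
  refine sum_congr rfl fun a _ => ?_
  simp only [decorate_spread hg, Fin.val_succ, add_lt_add_iff_right, ← Fin.lt_def,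
    (spread_strictMono hg).lt_iff_lt]

lemma spread_mem_descents_decorate_iff {g : Fin k → Fin (m + 1)} (hg : Monotone g)
    (σ : Equiv.Perm (Fin k)) (a : Fin k) :
    (spread g a : ℕ) ∈ descents (fun i => (decorate g σ i : ℕ)) ↔
      (a : ℕ) ∈ descents σ ∨ (g a : ℕ) < nextEntry m g a := by
  simp only [mem_descents, Fin.eta, decorate_spread hg, Fin.val_succ]
  by_cases hnext : ∃ b, (spread g b : ℕ) = spread g a + 1
  · obtain ⟨b, hb⟩ := hnext
    obtain ⟨hba, hgb⟩ := (spread_eq_spread_add_one_iff hg).1 hb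
    have hk : (a : ℕ) + 1 < k := hba ▸ b.isLt
    obtain rfl : b = ⟨a + 1, hk⟩ := Fin.ext hba
    have hb' : (⟨spread g a + 1, hb ▸ (spread g _).isLt⟩ : Fin (m + k))
        = spread g ⟨a + 1, hk⟩ :=
      Fin.ext hb.symm
    simp only [hb', decorate_spread hg, nextEntry, dif_pos hk, hgb, lt_irrefl, or_false,
      Fin.val_succ, add_lt_add_iff_right, ← Fin.lt_def, (spread_strictMono hg).lt_iff_lt,
      exists_prop]
    exact ⟨fun h => ⟨hk, h.2⟩, fun ⟨_, h⟩ => ⟨hb ▸ (spread g _).isLt, h⟩⟩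
  · have hzero (h) : (decorate g σ ⟨spread g a + 1, h⟩ : ℕ) = 0 := by
      rw [decorate_of_notMem_range g σ fun ⟨b, hb⟩ => hnext ⟨b, by rw [hb]⟩, Fin.val_zero]
    simp only [hzero, Nat.zero_lt_succ, exists_prop, and_true]
    by_cases hk : (a : ℕ) + 1 < k
    · have hne : g ⟨a + 1, hk⟩ ≠ g a := fun h =>
        hnext ⟨_, (spread_eq_spread_add_one_iff hg).2 ⟨rfl, h⟩⟩
      have hle := Fin.le_def.1 (hg (show a ≤ ⟨a + 1, hk⟩ from Fin.le_def.2 (by simp)))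
      have hne' := Fin.val_ne_of_ne hne
      have hlast := (spread g ⟨a + 1, hk⟩).isLt
      simp only [nextEntry, dif_pos hk, spread] at hlast ⊢
      omega
    · have hnd : ¬ ∃ h : (a : ℕ) + 1 < k, σ ⟨a + 1, h⟩ < σ ⟨a, a.isLt⟩ :=
        fun ⟨h, _⟩ => hk h
      simp only [nextEntry, dif_neg hk, spread, hnd, false_or]
      omega

lemma dMaj_decorate {g : Fin k → Fin (m + 1)} (hg : Monotone g) (σ : Equiv.Perm (Fin k)) :
    dMaj (decorate g σ) = majShift (descents σ) m g + majNum σ := by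
  set W := fun i => (decorate g σ i : ℕ)
  have hoff (i : Fin (m + k)) (hi : i ∉ Set.range (spread g)) :
      (if (i : ℕ) ∈ descents W then (i : ℕ) + 1 else 0) = 0 := by
    refine if_neg fun hdes => ?_
    obtain ⟨_, hlt⟩ := mem_descents.1 hdes
    simp [W, decorate_of_notMem_range g σ hi] at hlt
  have hterm (a : Fin k) : (if (spread g a : ℕ) ∈ descents W then (spread g a : ℕ) + 1 else 0)
      = majShiftTerm (descents σ) a (g a) (nextEntry m g a)
        + if (a : ℕ) ∈ descents σ then (a : ℕ) + 1 else 0 := by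
    simp only [W, spread_mem_descents_decorate_iff hg]
    simp only [majShiftTerm, spread]
    by_cases hd : (a : ℕ) ∈ descents σ <;> by_cases hgap : (g a : ℕ) < nextEntry m g a <;>
      simp [hd, hgap] <;> omega
  rw [show dMaj (decorate g σ) = ∑ i ∈ descents W, (i + 1) from rfl, sum_descents_eq_sum_ite,
    sum_eq_sum_spread hg _ hoff, majShift, majNum_eq_sum_descents, sum_descents_eq_sum_ite,
    ← sum_add_distrib]
  exact sum_congr rfl fun a _ => hterm a

lemma decorate_injective {g g' : Fin k → Fin (m + 1)} (hg : Monotone g) (hg' : Monotone g')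
    {σ σ' : Equiv.Perm (Fin k)} (h : decorate g σ = decorate g' σ') : g = g' ∧ σ = σ' := by
  have hrange : Set.range (spread g) = Set.range (spread g') := by
    ext i
    rw [← decorate_ne_zero_iff hg σ, ← decorate_ne_zero_iff hg' σ', h]
  have hpos : spread g = spread g' :=
    ((spread_strictMono hg).range_inj (spread_strictMono hg')).1 hrange
  obtain rfl : g = g' := funext fun a => Fin.ext (by
    simpa [spread] using congrArg Fin.val (congrFun hpos a))
  refine ⟨rfl, Equiv.ext fun a => ?_⟩
  have := congrFun h (spread g a)
  rwa [decorate_spread hg, decorate_spread hg, Fin.succ_inj,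
    (spread_strictMono hg).injective.eq_iff] at this

lemma exists_decorate_eq {w : Fin (m + k) → Fin (m + k + 1)} (hw : IsDecorated w)
    (hcard : #(wordSupport w) = k) :
    ∃ (g : Fin k → Fin (m + 1)) (σ : Equiv.Perm (Fin k)),
      Monotone g ∧ decorate g σ = w := by
  set e := (wordSupport w).orderEmbOfFin hcard
  have hrange (i : Fin (m + k)) : i ∈ Set.range e ↔ (w i : ℕ) ≠ 0 := by
    simp [e, range_orderEmbOfFin, wordSupport]
  obtain ⟨g, hg, hpos⟩ := exists_spread_eq e.strictMono
  have hval (a : Fin k) : ∃ b, (w (e a) : ℕ) = e b + 1 := by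
    obtain ⟨j, hj, hwj⟩ := hw.2 (e a) ((hrange _).1 ⟨a, rfl⟩)
    obtain ⟨b, rfl⟩ := (hrange j).2 hj
    exact ⟨b, hwj⟩
  choose τ hτ using hval
  have hτ_inj : Function.Injective τ := fun a a' h =>
    e.injective (hw.1 _ _ ((hrange _).1 ⟨a, rfl⟩) (Fin.ext (by rw [hτ, hτ, h])))
  refine ⟨g, Equiv.ofBijective τ (Finite.injective_iff_bijective.1 hτ_inj), hg,
    funext fun i => Fin.ext ?_⟩
  by_cases hi : i ∈ Set.range (spread g)
  · obtain ⟨a, rfl⟩ := hi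
    rw [decorate_spread hg, Fin.val_succ, hpos, hτ]
    rfl
  · rw [decorate_of_notMem_range g _ hi]
    rw [hpos, hrange, not_not] at hi
    exact hi.symm

end Decorate

section DecoratedSum

variable {m k : ℕ}

lemma mem_boundedMonotone_self {g : Fin k → Fin (m + 1)} :
    g ∈ boundedMonotone m k m ↔ Monotone g := by
  simp [boundedMonotone, Fin.is_le]

lemma not_isTheta_decorate (hk : k ≠ 0) {g : Fin k → Fin (m + 1)} (hg : Monotone g)
    (σ : Equiv.Perm (Fin k)) : ¬ isTheta (decorate g σ) := by
  rw [← card_wordSupport_eq_zero_iff, card_wordSupport_decorate hg]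
  exact hk

lemma dMajSubExc_decorate (hk : k ≠ 0) {g : Fin k → Fin (m + 1)} (hg : Monotone g)
    (σ : Equiv.Perm (Fin k)) :
    dMajSubExc (decorate g σ) = majShift (descents σ) m g + (majNum σ - excNum σ) := by
  have := excNum_le_majNum σ
  rw [dMajSubExc, if_neg (not_isTheta_decorate hk hg σ), dMaj_decorate hg, dExc_decorate hg]
  omega

lemma dExcP1_decorate (hk : k ≠ 0) {g : Fin k → Fin (m + 1)} (hg : Monotone g)
    (σ : Equiv.Perm (Fin k)) : dExcP1 (decorate g σ) = excNum σ + 1 := by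
  rw [dExcP1, if_neg (not_isTheta_decorate hk hg σ), dExc_decorate hg]

lemma sum_decorated_card_wordSupport_eq (m : ℕ) (hk : k ≠ 0) :
    ∑ w ∈ {w : Fin (m + k) → Fin (m + k + 1) | IsDecorated w} with #(wordSupport w) = k,
        Polynomial.C (X ^ dMajSubExc w) * Polynomial.X ^ dExcP1 w
      = Polynomial.C (qBinom (m + k) k) * qEulerian k * Polynomial.X := by
  have hmem {p : (Fin k → Fin (m + 1)) × Equiv.Perm (Fin k)}
      (hp : p ∈ boundedMonotone m k m ×ˢ univ) : Monotone p.1 :=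
    mem_boundedMonotone_self.1 (mem_product.1 hp).1
  rw [← sum_nbij (fun p => decorate p.1 p.2) (s := boundedMonotone m k m ×ˢ univ)
    (fun p hp => by simp [isDecorated_decorate (hmem hp), card_wordSupport_decorate (hmem hp)])
    (fun p hp p' hp' h => Prod.ext_iff.2 (decorate_injective (hmem hp) (hmem hp') h))
    (fun w hw => by
      simp only [mem_filter, mem_univ, true_and, Finset.coe_filter, Set.mem_ofPred_eq] at hw
      obtain ⟨g, σ, hg, rfl⟩ := exists_decorate_eq hw.1 hw.2
      exact ⟨(g, σ), by simp [mem_boundedMonotone_self, hg], rfl⟩)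
    (fun p hp => by rw [dMajSubExc_decorate hk (hmem hp), dExcP1_decorate hk (hmem hp)]),
    sum_product_right, qEulerian, mul_sum, sum_mul]
  refine sum_congr rfl fun σ _ => ?_
  rw [← sum_boundedMonotone_X_pow_majShift (descents σ) le_rfl, map_sum, sum_mul, sum_mul]
  refine sum_congr rfl fun g _ => ?_
  simp only [pow_add, map_mul, pow_succ]
  ring

lemma sum_decorated_card_wordSupport_zero (n : ℕ) :
    ∑ w ∈ {w : Fin n → Fin (n + 1) | IsDecorated w} with #(wordSupport w) = 0,
        Polynomial.C ((X : RatFunc ℚ) ^ dMajSubExc w) * Polynomial.X ^ dExcP1 w = 1 := by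
  have htheta {w : Fin n → Fin (n + 1)} : isTheta w ↔ w = 0 :=
    ⟨fun h => funext fun i => Fin.ext (h i), by rintro rfl i; rfl⟩
  rw [sum_eq_single_of_mem 0 ?_ fun w hw hne => absurd (htheta.1 ?_) hne]
  · simp [dMajSubExc, dExcP1, htheta]
  · exact mem_filter.2 ⟨by simp [IsDecorated], card_wordSupport_eq_zero_iff.2 (htheta.2 rfl)⟩
  · exact card_wordSupport_eq_zero_iff.1 (mem_filter.1 hw).2

end DecoratedSum

/-- The `q`-binomial Eulerian polynomial
`Ã_n(q,t) = 1 + t·Σ_{k=1}^n [n choose k]_q · A_k(q,t)` equals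
`Σ_{σ ∈ S̃_n} q^{maj(σ)-exc(σ)} t^{exc(σ)+1}`, the sum over decorated
permutations of `[n]`. -/
theorem qbinomial_eulerian_decorated (n : ℕ) :
    (1 : Polynomial (RatFunc ℚ)) + Polynomial.X *
        ∑ k ∈ Finset.Icc 1 n, Polynomial.C (qBinom n k) * qEulerian k
      = ∑ w ∈ Finset.univ.filter (fun w : Fin n → Fin (n + 1) => IsDecorated w),
          Polynomial.C ((RatFunc.X : RatFunc ℚ) ^ dMajSubExc w) *
            Polynomial.X ^ dExcP1 w := by
  have hcard (w : Fin n → Fin (n + 1)) : #(wordSupport w) ∈ range (n + 1) :=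
    mem_range.2 (Nat.lt_succ_of_le (card_le_univ _ |>.trans (Fintype.card_fin n).le))
  rw [← sum_fiberwise_of_maps_to fun w _ => hcard w, range_eq_Ico,
    sum_eq_sum_Ico_succ_bot n.succ_pos, sum_decorated_card_wordSupport_zero, mul_sum]
  congr 1
  refine sum_congr rfl fun k hk => ?_
  obtain ⟨hk0, hkn⟩ := mem_Icc.1 hk
  obtain ⟨m, rfl⟩ : ∃ m, n = m + k := ⟨n - k, by omega⟩
  rw [sum_decorated_card_wordSupport_eq m (by omega), mul_comm]
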